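/- arXiv:1805.09151 — 4 statements merged into one kernel-verified Lean document; each statement's English description precedes it below -/
import Mathlib

section
/- Let G ∈ 𝒞𝒢^s(n) with 2 ≤ s ≤ n−3, let v* be a vertex of minimum degree t of G, and set Y = V(G) ∖ N[v*]. If G[Y] ≅ K_{n_1,…,n_l} ∪ rK_1 with r ≥ 1 (i.e., G[Y] has at least one isolated vertex), then G ∈ 𝒢_1^s(n). In particular, every isolated vertex y of G[Y] satisfies N(y) = N(v*) and hence is a congruent vertex of I-type. -/
open Matrix BigOperators

namespace TwoPosEig

variable {V : Type*}

/-- The real adjacency matrix of a simple graph (classical decidability). -/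
noncomputable def adjMat [Fintype V] [DecidableEq V] (G : SimpleGraph V) : Matrix V V ℝ :=
  letI := Classical.decRel G.Adj
  G.adjMatrix ℝ

lemma adjMat_isHermitian [Fintype V] [DecidableEq V] (G : SimpleGraph V) :
    (adjMat G).IsHermitian := by
  letI := Classical.decRel G.Adj
  rw [Matrix.IsHermitian, Matrix.conjTranspose_eq_transpose_of_trivial]
  exact SimpleGraph.isSymm_adjMatrix G

/-- The eigenvalues of (the adjacency matrix of) a graph, as a function on vertices. -/
noncomputable def eigs [Fintype V] [DecidableEq V] (G : SimpleGraph V) : V → ℝ :=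
  (adjMat_isHermitian G).eigenvalues

/-- `p(G)`: the number of positive eigenvalues (with multiplicity). -/
noncomputable def posCount [Finite V] (G : SimpleGraph V) : ℕ :=
  letI := Fintype.ofFinite V
  letI := Classical.decEq V
  Nat.card {i : V // 0 < eigs G i}

/-- `η(G)`: the number of zero eigenvalues (with multiplicity), the nullity. -/
noncomputable def nullCount [Finite V] (G : SimpleGraph V) : ℕ :=
  letI := Fintype.ofFinite V
  letI := Classical.decEq V
  Nat.card {i : V // eigs G i = 0}

/-- `λ_k(G)`: the `k`-th largest eigenvalue (1-indexed); junk value `0` out of range. -/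
noncomputable def lam [Finite V] (G : SimpleGraph V) (k : ℕ) : ℝ :=
  letI := Fintype.ofFinite V
  letI := Classical.decEq V
  (((Finset.univ.val.map (eigs G)).sort (· ≤ ·)).reverse).getD (k - 1) 0

/-- Membership in `𝒢^s(n)` (the order `n` being the cardinality of the vertex type):
`p(G) = 2` and `η(G) = s`. -/
def memClass [Finite V] (s : ℕ) (G : SimpleGraph V) : Prop :=
  posCount G = 2 ∧ nullCount G = s

/-- `v` is a congruent vertex of I-type: some other vertex `u`, non-adjacent to `v`,
has the same neighbourhood. -/
def ITypeVertex (G : SimpleGraph V) (v : V) : Prop :=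
  ∃ u, u ≠ v ∧ ¬ G.Adj u v ∧ G.neighborSet u = G.neighborSet v

/-- `u` is a congruent vertex of II-type: there are two non-adjacent vertices `v, w`
such that `N(u)` is a disjoint union of `N(v)` and `N(w)`. -/
def IITypeVertex (G : SimpleGraph V) (u : V) : Prop :=
  ∃ v w, v ≠ w ∧ ¬ G.Adj v w ∧ Disjoint (G.neighborSet v) (G.neighborSet w) ∧
    G.neighborSet u = G.neighborSet v ∪ G.neighborSet w

/-- `u v x y` is a congruent (induced) quadrangle with congruent edges `uv`, `xy`. -/
def CongruentQuad (G : SimpleGraph V) (u v x y : V) : Prop :=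
  u ≠ v ∧ u ≠ x ∧ u ≠ y ∧ v ≠ x ∧ v ≠ y ∧ x ≠ y ∧
  G.Adj u v ∧ G.Adj v x ∧ G.Adj x y ∧ G.Adj y u ∧ ¬ G.Adj u x ∧ ¬ G.Adj v y ∧
  G.neighborSet u \ {y, v} = G.neighborSet v \ {u, x} ∧
  G.neighborSet x \ {v, y} = G.neighborSet y \ {x, u}

/-- A congruent vertex of III-type: a vertex of some congruent quadrangle. -/
def IIITypeVertex (G : SimpleGraph V) (z : V) : Prop :=
  ∃ u v x y, CongruentQuad G u v x y ∧ (z = u ∨ z = v ∨ z = x ∨ z = y)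

/-- Membership in `𝒢_1^s(n)`: a connected graph obtained by adding a congruent vertex
of I-type to some graph in `𝒢^{s-1}(n-1)`. -/
def memG1 {n : ℕ} (s : ℕ) (G : SimpleGraph (Fin n)) : Prop :=
  G.Connected ∧ ∃ v : Fin n, ITypeVertex G v ∧ memClass (s - 1) (G.induce {v}ᶜ)

/-- Membership in `𝒢_2^s(n)`. -/
def memG2 {n : ℕ} (s : ℕ) (G : SimpleGraph (Fin n)) : Prop :=
  G.Connected ∧ ∃ v : Fin n, IITypeVertex G v ∧ memClass (s - 1) (G.induce {v}ᶜ)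

/-- Membership in `𝒢_3^s(n)`. -/
def memG3 {n : ℕ} (s : ℕ) (G : SimpleGraph (Fin n)) : Prop :=
  G.Connected ∧ ∃ v : Fin n, IIITypeVertex G v ∧ memClass (s - 1) (G.induce {v}ᶜ)

/-- Oboudi's graph `G_m`: two cliques `K_{⌈m/2⌉}` (on `v_1, …`) and `K_{⌊m/2⌋}`
(on `w_1, …`), where `v_i ∼ w_j` iff `j ≥ ⌊m/2⌋ - i + 2` (1-indexed), i.e. (0-indexed)
`⌊m/2⌋ ≤ i + j`. -/
def oboudi (m : ℕ) : SimpleGraph (Fin ((m + 1) / 2) ⊕ Fin (m / 2)) :=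
  SimpleGraph.fromRel fun a b =>
    match a, b with
    | Sum.inl _, Sum.inl _ => True
    | Sum.inr _, Sum.inr _ => True
    | Sum.inl i, Sum.inr j => m / 2 ≤ (i : ℕ) + (j : ℕ)
    | Sum.inr _, Sum.inl _ => False

/-- The generalized lexicographic product `G[K_{t v}]`: each vertex `v` is replaced by a
clique of order `t v`, with complete joins along edges of `G`. -/
def lexProd (G : SimpleGraph V) (t : V → ℕ) : SimpleGraph (Σ v : V, Fin (t v)) :=
  SimpleGraph.fromRel fun a b => a.1 = b.1 ∨ G.Adj a.1 b.1

/-- Index conversion identifying the vertices `v_1, …, v_{⌈k/2⌉}, w_1, …, w_{⌊k/2⌋}`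
of `G_k` with `Fin k` (in this order). -/
def toIdx {k : ℕ} : Fin ((k + 1) / 2) ⊕ Fin (k / 2) → Fin k
  | Sum.inl i => ⟨(i : ℕ), by have := i.isLt; omega⟩
  | Sum.inr j => ⟨(k + 1) / 2 + (j : ℕ), by have := j.isLt; omega⟩

/-- `B_k(n_1, …, n_k) = G_k[K_{n_1}, …, K_{n_k}]`. -/
def bGraph (k : ℕ) (nn : Fin k → ℕ) :
    SimpleGraph (Σ v : Fin ((k + 1) / 2) ⊕ Fin (k / 2), Fin (nn (toIdx v))) :=
  lexProd (oboudi k) fun v => nn (toIdx v)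

/-- Membership in `𝓓* = {B_k(n_1,…,n_k) ∈ 𝓑_k^{00}(n) : 4 ≤ k ≤ 14, n ≤ 14}` (up to
isomorphism). -/
def memDstar {n : ℕ} (G : SimpleGraph (Fin n)) : Prop :=
  ∃ (k : ℕ) (nn : Fin k → ℕ), 4 ≤ k ∧ k ≤ 14 ∧ (∀ i, 1 ≤ nn i) ∧ (∑ i, nn i) ≤ 14 ∧
    lam (bGraph k nn) 3 = 0 ∧ lam (bGraph k nn) 4 = 0 ∧ Nonempty (G ≃g bGraph k nn)

/-- The degree of a vertex. -/
noncomputable def deg [Finite V] (G : SimpleGraph V) (v : V) : ℕ :=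
  Nat.card (G.neighborSet v)

/-- `v` is a vertex of minimum degree. -/
def IsMinDegVertex [Finite V] (G : SimpleGraph V) (v : V) : Prop :=
  ∀ w, deg G v ≤ deg G w

/-- The set `Y = V(G) ∖ N[v]`. -/
def Yset (G : SimpleGraph V) (v : V) : Set V :=
  (G.neighborSet v ∪ {v})ᶜ

/-- `G` is `X`-complete with respect to `v`: `G[Y] ≅ K_{n-t-1}` with `n-t-1 ≥ 2`
and `G[X]` is complete, where `X = N(v)`, `Y = V(G) ∖ N[v]`. -/
def IsXComplete [Finite V] (G : SimpleGraph V) (v : V) : Prop :=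
  2 ≤ (Yset G v).ncard ∧ (Yset G v).Pairwise G.Adj ∧ (G.neighborSet v).Pairwise G.Adj

/-- An `X`-complete graph is reduced when the traces on `Y` of the neighbourhoods of
vertices of `X` form a chain. -/
def IsReduced (G : SimpleGraph V) (v : V) : Prop :=
  ∀ x ∈ G.neighborSet v, ∀ x' ∈ G.neighborSet v,
    G.neighborSet x ∩ Yset G v ⊆ G.neighborSet x' ∩ Yset G v ∨
    G.neighborSet x' ∩ Yset G v ⊆ G.neighborSet x ∩ Yset G v

end TwoPosEig

/-! An isolated vertex `y` of `G[Y]` has all its neighbours in `N(v)`, and minimality of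
`deg v` forces `N(y) = N(v)`. Deleting such a twin preserves `p` and the rank: `A(G - y)` is a
principal submatrix of `A(G)`, while `A(G)` is `A(G - y)` with the row and column of `v`
duplicated, so each of the two matrices is a generalized principal submatrix `B.submatrix f f`
of the other. Both `p` (via Sylvester's law of inertia, `sigPos`) and the rank can only drop
under this operation, hence they agree, and the nullity drops by exactly one. -/

theorem sigPos_comp_le {K M M' : Type*} [Field K] [LinearOrder K] [IsStrictOrderedRing K]
    [AddCommGroup M] [Module K M] [FiniteDimensional K M]
    [AddCommGroup M'] [Module K M'] [FiniteDimensional K M']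
    (Q : QuadraticForm K M) (f : M' →ₗ[K] M) : sigPos (Q.comp f) ≤ sigPos Q := by
  obtain ⟨V, hV, hposV⟩ := exists_finrank_eq_sigPos_and_posDef (Q.comp f)
  set g := f ∘ₗ V.subtype
  have hpos : ∀ x : V, x ≠ 0 → 0 < Q (g x) := hposV
  have hg : Function.Injective g := by
    rw [← LinearMap.ker_eq_bot, LinearMap.ker_eq_bot']
    intro x hx
    by_contra hx0
    simpa [hx] using hpos x hx0
  calc sigPos (Q.comp f) = Module.finrank K (LinearMap.range g) := by
        rw [LinearMap.finrank_range_of_inj hg, hV]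
    _ ≤ sigPos Q := by
      refine le_sigPos_of_posDef Q ?_
      rintro ⟨_, x, rfl⟩ hx
      exact hpos x (by rintro rfl; simp at hx)

namespace Matrix

theorem toQuadraticForm'_diagonal {n K : Type*} [Fintype n] [DecidableEq n] [CommRing K]
    (w : n → K) : (diagonal w).toQuadraticForm' = QuadraticMap.weightedSumSquares K w := by
  ext x
  simp only [toQuadraticForm', LinearMap.BilinMap.toQuadraticMap_apply, toLinearMap₂'_apply',
    mulVec_diagonal, QuadraticMap.weightedSumSquares_apply, dotProduct, smul_eq_mul]
  exact Finset.sum_congr rfl fun i _ => by ring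

theorem toQuadraticForm'_transpose_mul_mul {n m K : Type*} [Fintype n] [DecidableEq n]
    [Fintype m] [DecidableEq m] [CommRing K] (A : Matrix n n K) (P : Matrix n m K) :
    (Pᵀ * A * P).toQuadraticForm' = A.toQuadraticForm'.comp (toLin' P) := by
  ext x
  simp [toQuadraticForm', toLinearMap₂'_apply', dotProduct_mulVec, ← mulVec_mulVec,
    vecMul_transpose]

theorem submatrix_eq_transpose_mul_mul {n m K : Type*} [Fintype n] [DecidableEq n] [CommRing K]
    (A : Matrix n n K) (f : m → n) :
    A.submatrix f f =
      ((1 : Matrix n n K).submatrix id f)ᵀ * A * (1 : Matrix n n K).submatrix id f := by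
  have hrows := one_submatrix_mul f (Equiv.refl n) A
  have hcols := mul_submatrix_one (Equiv.refl n) f (A.submatrix f id)
  simp only [Equiv.coe_refl, Equiv.refl_symm, Function.id_comp] at hrows hcols
  rw [transpose_submatrix, transpose_one, hrows, hcols, submatrix_submatrix]
  rfl

section Inertia

variable {n m K : Type*} [Fintype n] [DecidableEq n] [Fintype m] [DecidableEq m]
  [Field K] [LinearOrder K] [IsStrictOrderedRing K]

theorem sigPos_transpose_mul_mul_le (A : Matrix n n K) (P : Matrix n m K) :
    sigPos (Pᵀ * A * P).toQuadraticForm' ≤ sigPos A.toQuadraticForm' := by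
  rw [toQuadraticForm'_transpose_mul_mul]
  exact sigPos_comp_le _ _

theorem sigPos_submatrix_le (A : Matrix n n K) (f : m → n) :
    sigPos (A.submatrix f f).toQuadraticForm' ≤ sigPos A.toQuadraticForm' := by
  rw [submatrix_eq_transpose_mul_mul]
  exact sigPos_transpose_mul_mul_le _ _

end Inertia

theorem IsHermitian.sigPos_toQuadraticForm' {n : Type*} [Fintype n] [DecidableEq n]
    {A : Matrix n n ℝ} (hA : A.IsHermitian) :
    sigPos A.toQuadraticForm' = Fintype.card {i // 0 < hA.eigenvalues i} := by
  set U : Matrix n n ℝ := (hA.eigenvectorUnitary : Matrix n n ℝ)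
  have hU : star U = Uᵀ := by rw [star_eq_conjTranspose, conjTranspose_eq_transpose_of_trivial]
  have hA_eq : A = Uᵀᵀ * diagonal hA.eigenvalues * Uᵀ := by
    rw [transpose_transpose, ← hU]
    simpa [U] using hA.spectral_theorem
  have hD_eq : diagonal hA.eigenvalues = Uᵀ * A * U := by
    rw [← hU]
    simpa [U] using hA.conjStarAlgAut_star_eigenvectorUnitary.symm
  have hle := sigPos_transpose_mul_mul_le (diagonal hA.eigenvalues) Uᵀ
  have hge := sigPos_transpose_mul_mul_le A U
  rw [← hA_eq, toQuadraticForm'_diagonal, QuadraticForm.sigPos_weightedSumSquares] at hle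
  rw [← hD_eq, toQuadraticForm'_diagonal, QuadraticForm.sigPos_weightedSumSquares] at hge
  rw [le_antisymm hle hge, Set.ncard_eq_toFinset_card', Fintype.card_subtype]
  simp

end Matrix

theorem SimpleGraph.Iso.exists_forall_not_adj_of_sum_bot {α β γ : Type*} {H : SimpleGraph α}
    {H' : SimpleGraph β} (e : H ≃g H' ⊕g (⊥ : SimpleGraph γ)) (c : γ) :
    ∃ a, ∀ b, ¬ H.Adj a b := by
  refine ⟨e.symm (Sum.inr c), fun b hab => ?_⟩
  have := e.map_adj_iff.mpr hab
  rcases h : e b <;> simp_all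

theorem SimpleGraph.eq_comap_induce_compl_of_neighborSet_eq {W : Type*} [DecidableEq W] {G : SimpleGraph W}
    {y v : W} (hyv : y ≠ v) (hN : G.neighborSet y = G.neighborSet v) :
    G = (G.induce {y}ᶜ).comap
      fun a => if h : a = y then ⟨v, hyv.symm⟩ else ⟨a, h⟩ := by
  have hadj : ∀ w, G.Adj y w ↔ G.Adj v w := fun w => Set.ext_iff.mp hN w
  ext a b
  by_cases ha : a = y <;> by_cases hb : b = y <;> simp [ha, hb, hadj, G.adj_comm a]

namespace TwoPosEig

section Spectrum

variable {W W' : Type*} [Fintype W] [DecidableEq W] [Fintype W'] [DecidableEq W']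

theorem adjMat_comap (G : SimpleGraph W) (f : W' → W) :
    adjMat (G.comap f) = (adjMat G).submatrix f f := by
  ext i j
  by_cases h : G.Adj (f i) (f j) <;> simp [adjMat, h]

theorem posCount_eq_sigPos (G : SimpleGraph W) :
    posCount G = sigPos (adjMat G).toQuadraticForm' := by
  rw [(adjMat_isHermitian G).sigPos_toQuadraticForm', posCount,
    Subsingleton.elim (Fintype.ofFinite W) ‹_›, Subsingleton.elim (Classical.decEq W) ‹_›,
    Nat.card_eq_fintype_card]
  rfl

theorem nullCount_eq_card_sub_rank (G : SimpleGraph W) :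
    nullCount G = Fintype.card W - (adjMat G).rank := by
  rw [(adjMat_isHermitian G).rank_eq_card_non_zero_eigs, nullCount,
    Subsingleton.elim (Fintype.ofFinite W) ‹_›, Subsingleton.elim (Classical.decEq W) ‹_›,
    Nat.card_eq_fintype_card, ← Fintype.card_subtype_compl]
  simp only [ne_eq, not_not]
  rfl

theorem posCount_comap_le (G : SimpleGraph W) (f : W' → W) :
    posCount (G.comap f) ≤ posCount G := by
  rw [posCount_eq_sigPos, posCount_eq_sigPos, adjMat_comap]
  exact Matrix.sigPos_submatrix_le _ _

theorem rank_adjMat_comap_le (G : SimpleGraph W) (f : W' → W) :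
    (adjMat (G.comap f)).rank ≤ (adjMat G).rank := by
  rw [adjMat_comap]
  exact Matrix.rank_submatrix_le _ _ _

end Spectrum

theorem memClass_induce_compl_of_neighborSet_eq {W : Type*} [Fintype W] [DecidableEq W]
    {G : SimpleGraph W} {s : ℕ} (hG : memClass s G) {y v : W} (hyv : y ≠ v)
    (hN : G.neighborSet y = G.neighborSet v) : memClass (s - 1) (G.induce {y}ᶜ) := by
  have hG_eq := SimpleGraph.eq_comap_induce_compl_of_neighborSet_eq hyv hN
  have hpos : posCount (G.induce {y}ᶜ) = posCount G := by
    refine le_antisymm (posCount_comap_le G _) ?_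
    conv_lhs => rw [hG_eq]
    exact posCount_comap_le _ _
  have hrank : (adjMat (G.induce {y}ᶜ)).rank = (adjMat G).rank := by
    refine le_antisymm (rank_adjMat_comap_le G _) ?_
    conv_lhs => rw [hG_eq]
    exact rank_adjMat_comap_le _ _
  refine ⟨hpos ▸ hG.1, ?_⟩
  rw [← hG.2, nullCount_eq_card_sub_rank, nullCount_eq_card_sub_rank, hrank,
    Fintype.card_compl_set, Set.card_singleton]
  omega

theorem neighborSet_eq_of_forall_not_adj_Yset {V : Type*} [Finite V] {G : SimpleGraph V}
    {v y : V} (hv : IsMinDegVertex G v) (hy : y ∈ Yset G v)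
    (hiso : ∀ z ∈ Yset G v, ¬ G.Adj y z) : G.neighborSet y = G.neighborSet v := by
  simp only [Yset, Set.mem_compl_iff, Set.mem_union, SimpleGraph.mem_neighborSet,
    Set.mem_singleton_iff, not_or] at hy hiso
  have hsub : G.neighborSet y ⊆ G.neighborSet v := by
    intro w hw
    by_contra hwv
    have hw_ne : w ≠ v := by rintro rfl; exact hy.1 hw.symm
    exact hiso w ⟨hwv, hw_ne⟩ hw
  refine Set.eq_of_subset_of_ncard_le hsub ?_ (Set.toFinite _)
  rw [← Nat.card_coe_set_eq, ← Nat.card_coe_set_eq]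
  exact hv y

theorem isolated_in_Y_general {n s : ℕ}
    (G : SimpleGraph (Fin n)) (hconn : G.Connected) (hG : memClass s G)
    (v : Fin n) (hv : IsMinDegVertex G v) (Y : Set (Fin n)) (hY : Y = Yset G v)
    (hstr : ∃ (l r : ℕ) (nn : Fin l → ℕ), 1 ≤ r ∧ (∀ i, 1 ≤ nn i) ∧
      Nonempty ((G.induce Y) ≃g
        ((SimpleGraph.completeMultipartiteGraph fun i => Fin (nn i)) ⊕g (⊥ : SimpleGraph (Fin r))))) :
    memG1 s G ∧
    ∀ y ∈ Y, (∀ z ∈ Y, ¬ G.Adj y z) →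
      G.neighborSet y = G.neighborSet v ∧ ITypeVertex G y := by
  subst hY
  have hne : ∀ y ∈ Yset G v, y ≠ v := fun y hy hyv => hy (Or.inr hyv)
  have htwin : ∀ y ∈ Yset G v, (∀ z ∈ Yset G v, ¬ G.Adj y z) →
      G.neighborSet y = G.neighborSet v ∧ ITypeVertex G y := by
    intro y hy hiso
    have hN := neighborSet_eq_of_forall_not_adj_Yset hv hy hiso
    exact ⟨hN, v, (hne y hy).symm, fun hvy => hy (Or.inl hvy), hN.symm⟩
  refine ⟨⟨hconn, ?_⟩, htwin⟩
  obtain ⟨l, r, nn, hr, -, ⟨e⟩⟩ := hstr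
  obtain ⟨⟨y, hy⟩, hiso⟩ := e.exists_forall_not_adj_of_sum_bot ⟨0, hr⟩
  obtain ⟨hN, hI⟩ := htwin y hy fun z hz => hiso ⟨z, hz⟩
  exact ⟨y, hI, memClass_induce_compl_of_neighborSet_eq hG (hne y hy) hN⟩

theorem isolated_in_Y {n s : ℕ} (hs : 2 ≤ s) (hsn : s ≤ n - 3)
    (G : SimpleGraph (Fin n)) (hconn : G.Connected) (hG : memClass s G)
    (v : Fin n) (hv : IsMinDegVertex G v) (Y : Set (Fin n)) (hY : Y = Yset G v)
    (hstr : ∃ (l r : ℕ) (nn : Fin l → ℕ), 1 ≤ r ∧ (∀ i, 1 ≤ nn i) ∧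
      Nonempty ((G.induce Y) ≃g
        ((SimpleGraph.completeMultipartiteGraph fun i => Fin (nn i)) ⊕g (⊥ : SimpleGraph (Fin r))))) :
    memG1 s G ∧
    ∀ y ∈ Y, (∀ z ∈ Y, ¬ G.Adj y z) →
      G.neighborSet y = G.neighborSet v ∧ ITypeVertex G y :=
  isolated_in_Y_general G hconn hG v hv Y hY hstr

end TwoPosEig
end

section
/- Let G ∈ 𝒞𝒢^s(n) with 2 ≤ s ≤ n−3, let v* be a vertex of minimum degree t of G, set X = N(v*), Y = V(G) ∖ N[v*], and suppose G[Y] ≅ K_{n−t−1} with n−t−1 ≥ 2 while G[X] is not complete. Let x, x' ∈ X be non-adjacent with N_Y(x) = {y}. Then N_X(x) = X ∖ {x, x'}. Furthermore, if {y} = N_Y(x) ⊊ N_Y(x') = Y, then for every x* ∈ X ∖ {x, x'}, x* is adjacent to x' if and only if x* is adjacent to y; that is, N_X(x') = N_X(y) ∖ {x, x'}. -/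
/-!
Counting: `N(x)` consists of `v`, of `N_X(x) ⊆ X ∖ {x, x'}` and of `y` alone, while
`deg x ≥ deg v = |X|`; hence `N_X(x) = X ∖ {x, x'}`.

If some `z ∈ X ∖ {x, x'}` were adjacent to exactly one of `x'` and `y`, then `v, x, z, x', y`
and a second vertex `y' ∈ Y` would carry a three-dimensional subspace on which the adjacency
form is positive definite, whichever way `z` and `y'` are related. By the min-max principle this
forces three positive eigenvalues, contradicting `p(G) = 2`.
-/

open Matrix BigOperators

namespace TwoPosEig

variable {V : Type*}

section Inertia

variable {V κ : Type*} [Fintype V] [DecidableEq V] [Fintype κ]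

theorem card_le_card_pos_eigenvalues_of_posDef {A : Matrix V V ℝ} (hA : A.IsHermitian)
    {P : Matrix κ V ℝ} (hP : (P * A * Pᵀ).PosDef) :
    Fintype.card κ ≤ Fintype.card {i // 0 < hA.eigenvalues i} := by
  set U : Matrix V V ℝ := (hA.eigenvectorUnitary : Matrix V V ℝ)
  set Q : Matrix V κ ℝ := star U * Pᵀ
  have hPAP : P * A * Pᵀ = Qᵀ * diagonal hA.eigenvalues * Q := by
    conv_lhs => rw [hA.spectral_theorem]
    simp [Q, U, Unitary.conjStarAlgAut_apply, Matrix.transpose_mul, Matrix.mul_assoc,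
      RCLike.ofReal_real_eq_id, Matrix.star_eq_conjTranspose]
  -- too many directions: some nonzero `Pᵀ c` has no component along a positive eigenvector
  by_contra! hlt
  let f := (Q.submatrix (Subtype.val : {i // 0 < hA.eigenvalues i} → V) id).mulVecLin
  obtain ⟨c, hc, hfc⟩ := Submodule.ne_bot_iff _ |>.mp <|
    LinearMap.ker_ne_bot_of_finrank_lt (f := f) (by simpa using hlt)
  have hQc : ∀ i, 0 < hA.eigenvalues i → (Q *ᵥ c) i = 0 := fun i hi =>
    congrFun (LinearMap.mem_ker.mp hc) ⟨i, hi⟩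
  have hform : c ⬝ᵥ (P * A * Pᵀ) *ᵥ c = ∑ i, hA.eigenvalues i * (Q *ᵥ c) i ^ 2 := by
    rw [hPAP, ← Matrix.mulVec_mulVec, ← Matrix.mulVec_mulVec, Matrix.dotProduct_mulVec,
      Matrix.vecMul_transpose, dotProduct]
    exact Finset.sum_congr rfl fun i _ => by rw [Matrix.mulVec_diagonal]; ring
  have := hP.dotProduct_mulVec_pos hfc
  simp only [star_trivial] at this
  rw [hform] at this
  refine this.not_ge (Finset.sum_nonpos fun i _ => ?_)
  rcases lt_or_ge 0 (hA.eigenvalues i) with hi | hi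
  · simp [hQc i hi]
  · exact mul_nonpos_of_nonpos_of_nonneg hi (sq_nonneg _)

end Inertia

section Graph

variable {V : Type*} [Fintype V] [DecidableEq V]

lemma adjMat_of_adj {G : SimpleGraph V} {a b : V} (h : G.Adj a b) : adjMat G a b = 1 := by
  simp [adjMat, SimpleGraph.adjMatrix_apply, h]

lemma adjMat_of_not_adj {G : SimpleGraph V} {a b : V} (h : ¬ G.Adj a b) : adjMat G a b = 0 := by
  simp [adjMat, SimpleGraph.adjMatrix_apply, h]

lemma adjMat_mem_Icc (G : SimpleGraph V) (a b : V) : adjMat G a b ∈ Set.Icc 0 1 := by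
  by_cases h : G.Adj a b
  · simp [adjMat_of_adj h]
  · simp [adjMat_of_not_adj h]

lemma posCount_eq_card (G : SimpleGraph V) : posCount G = Fintype.card {i // 0 < eigs G i} := by
  rw [posCount, Nat.card_eq_fintype_card]
  congr!

theorem card_le_posCount_of_posDef {κ : Type*} [Fintype κ] {G : SimpleGraph V}
    {P : Matrix κ V ℝ} (hP : (P * adjMat G * Pᵀ).PosDef) : Fintype.card κ ≤ posCount G :=
  posCount_eq_card G ▸ card_le_card_pos_eigenvalues_of_posDef (adjMat_isHermitian G) hP

theorem card_le_posCount_of_submatrix {κ ι : Type*} [Fintype κ] [Fintype ι] {G : SimpleGraph V}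
    (u : ι → V) {R : Matrix κ ι ℝ} (hR : (R * (adjMat G).submatrix u u * Rᵀ).PosDef) :
    Fintype.card κ ≤ posCount G := by
  refine card_le_posCount_of_posDef (P := R * (1 : Matrix V V ℝ).submatrix u id) ?_
  have hleft : (1 : Matrix V V ℝ).submatrix u id * adjMat G = (adjMat G).submatrix u id := by
    ext; simp [Matrix.mul_apply, Matrix.one_apply]
  have hright : (adjMat G).submatrix u id * (1 : Matrix V V ℝ).submatrix id u =
      (adjMat G).submatrix u u := by
    ext; simp [Matrix.mul_apply, Matrix.one_apply]
  rwa [Matrix.transpose_mul, Matrix.transpose_submatrix, Matrix.transpose_one, Matrix.mul_assoc R,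
    hleft, ← Matrix.mul_assoc, Matrix.mul_assoc R, hright]

theorem three_le_posCount_of_hexad {G : SimpleGraph V} {v x z x' y y' : V}
    (hvx : G.Adj v x) (hvz : G.Adj v z) (hvx' : G.Adj v x') (hvy : ¬ G.Adj v y)
    (hvy' : ¬ G.Adj v y') (hxz : G.Adj x z) (hxx' : ¬ G.Adj x x') (hxy : G.Adj x y)
    (hxy' : ¬ G.Adj x y') (hzx' : G.Adj z x') (hzy : ¬ G.Adj z y) (hx'y : G.Adj x' y)
    (hx'y' : G.Adj x' y') (hyy' : G.Adj y y') : 3 ≤ posCount G := by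
  obtain ⟨t, hzy't, hy'zt⟩ : ∃ t, adjMat G z y' = t ∧ adjMat G y' z = t :=
    ⟨_, rfl, (adjMat_isHermitian G).apply z y'⟩
  have ht : t ∈ Set.Icc 0 1 := hzy't ▸ adjMat_mem_Icc G z y'
  have hB : (adjMat G).submatrix ![v, x, z, x', y, y'] ![v, x, z, x', y, y'] =
      !![0, 1, 1, 1, 0, 0; 1, 0, 1, 0, 1, 0; 1, 1, 0, 1, 0, t;
         1, 0, 1, 0, 1, 1; 0, 1, 0, 1, 0, 1; 0, 0, t, 1, 1, 0] := by
    ext i j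
    fin_cases i <;> fin_cases j <;>
      simp [hzy't, hy'zt, adjMat_of_adj, adjMat_of_not_adj, hvx, hvz, hvx', hvy, hvy', hxz, hxx',
        hxy, hxy', hzx', hzy, hx'y, hx'y', hyy', hvx.symm, hvz.symm, hvx'.symm, mt G.adj_symm hvy,
        mt G.adj_symm hvy', hxz.symm, mt G.adj_symm hxx', hxy.symm, mt G.adj_symm hxy', hzx'.symm,
        mt G.adj_symm hzy, hx'y.symm, hx'y'.symm, hyy'.symm]
  -- three integer vectors, orthogonal for the form of the hexad whatever the value of `t`
  let R : Matrix (Fin 3) (Fin 6) ℝ :=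
    !![-2, 0, -1, 0, 1, 1; -1, 2, 0, -1, 2, 0; 0, -2, 1, 2, -1, 1]
  have hGram : R * !![0, 1, 1, 1, 0, 0; 1, 0, 1, 0, 1, 0; 1, 1, 0, 1, 0, t;
      1, 0, 1, 0, 1, 1; 0, 1, 0, 1, 0, 1; 0, 0, t, 1, 1, 0] * Rᵀ =
      diagonal ![6 - 2 * t, 2, 2 + 2 * t] := by
    ext i j
    fin_cases i <;> fin_cases j <;>
      simp [R, Matrix.mul_apply, Fin.sum_univ_succ] <;> ring
  simpa using card_le_posCount_of_submatrix ![v, x, z, x', y, y'] (R := R) <| by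
    rw [hB, hGram, posDef_diagonal_iff]
    intro i
    fin_cases i <;> simp <;> linarith [ht.1, ht.2]

theorem adj_iff_adj_of_posCount_eq_two {G : SimpleGraph V} (hp : posCount G = 2)
    {v x x' y y' z : V} (hvx : G.Adj v x) (hvx' : G.Adj v x') (hvy : ¬ G.Adj v y)
    (hvy' : ¬ G.Adj v y') (hxx' : ¬ G.Adj x x') (hxy : G.Adj x y) (hxy' : ¬ G.Adj x y')
    (hx'y : G.Adj x' y) (hx'y' : G.Adj x' y') (hyy' : G.Adj y y') (hvz : G.Adj v z)
    (hxz : G.Adj x z) : G.Adj z x' ↔ G.Adj z y := by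
  constructor
  · intro hzx'
    by_contra hzy
    have := three_le_posCount_of_hexad hvx hvz hvx' hvy hvy' hxz hxx' hxy hxy' hzx' hzy hx'y
      hx'y' hyy'
    omega
  · intro hzy
    by_contra hzx'
    -- swapping `v ↔ x` and `x' ↔ y` preserves all the other adjacencies of the hexad
    have := three_le_posCount_of_hexad hvx.symm hxz hxy hxx' hxy' hvz hvy hvx' hvy' hzy hzx'
      hx'y.symm hyy' hx'y'
    omega

end Graph

section Degree

variable {V : Type*} {G : SimpleGraph V}

lemma mem_Yset {v a : V} : a ∈ Yset G v ↔ ¬ G.Adj v a ∧ a ≠ v := by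
  simp [Yset, not_or, and_comm]

lemma deg_eq_of_adj [Finite V] {v x : V} (h : G.Adj v x) :
    deg G x = (G.neighborSet x ∩ G.neighborSet v).ncard + 1 +
      (G.neighborSet x ∩ Yset G v).ncard := by
  have hclosed : G.neighborSet x ∩ (G.neighborSet v ∪ {v}) =
      insert v (G.neighborSet x ∩ G.neighborSet v) := by
    ext a
    by_cases hav : a = v <;> simp [hav, h.symm, or_comm]
  rw [deg, Nat.card_coe_set_eq, ← Set.ncard_inter_add_ncard_sdiff_eq_ncard _ (G.neighborSet v ∪ {v}),
    hclosed, Set.ncard_insert_of_notMem (fun hv => G.irrefl hv.2), Yset, Set.sdiff_eq]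

theorem neighborSet_inter_eq_sdiff_pair [Finite V] {v x x' : V} (hv : IsMinDegVertex G v)
    (hx : G.Adj v x) (hx' : G.Adj v x') (hne : x ≠ x') (hxx' : ¬ G.Adj x x')
    (hY : (G.neighborSet x ∩ Yset G v).ncard ≤ 1) :
    G.neighborSet x ∩ G.neighborSet v = G.neighborSet v \ {x, x'} := by
  have hsub : G.neighborSet x ∩ G.neighborSet v ⊆ G.neighborSet v \ {x, x'} := by
    rintro a ⟨hxa, hva⟩
    refine ⟨hva, ?_⟩
    rintro (rfl | rfl)
    exacts [G.irrefl hxa, hxx' hxa]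
  have hpair : {x, x'} ⊆ G.neighborSet v := Set.insert_subset hx (Set.singleton_subset_iff.mpr hx')
  have hdeg := hv x
  rw [deg_eq_of_adj hx, deg, Nat.card_coe_set_eq] at hdeg
  refine Set.eq_of_subset_of_ncard_le hsub ?_
  rw [Set.ncard_sdiff hpair, Set.ncard_pair hne]
  omega

end Degree

theorem Xincomplete_pendant_general {n s : ℕ}
    (G : SimpleGraph (Fin n)) (hG : memClass s G)
    (v : Fin n) (hv : IsMinDegVertex G v)
    (X Y : Set (Fin n)) (hX : X = G.neighborSet v) (hY : Y = Yset G v)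
    (hYcl : Y.Pairwise G.Adj) (hYcard : 2 ≤ Y.ncard)
    (x x' : Fin n) (hx : x ∈ X) (hx' : x' ∈ X) (hne : x ≠ x') (hnadj : ¬ G.Adj x x')
    (y : Fin n) (hNy : G.neighborSet x ∩ Y = {y}) :
    G.neighborSet x ∩ X = X \ {x, x'} ∧
    (G.neighborSet x' ∩ Y = Y →
      ((∀ z ∈ X \ ({x, x'} : Set (Fin n)), (G.Adj z x' ↔ G.Adj z y)) ∧
        G.neighborSet x' ∩ X = (G.neighborSet y ∩ X) \ {x, x'})) := by
  subst hX hY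
  have hNX : G.neighborSet x ∩ G.neighborSet v = G.neighborSet v \ {x, x'} :=
    neighborSet_inter_eq_sdiff_pair hv hx hx' hne hnadj (by rw [hNy, Set.ncard_singleton])
  refine ⟨hNX, fun hx'Y => ?_⟩
  have hy : y ∈ G.neighborSet x ∩ Yset G v := hNy ▸ rfl
  obtain ⟨y', hy'Y, hy'y⟩ := Set.exists_ne_of_one_lt_ncard (by omega : 1 < (Yset G v).ncard) y
  have hx'Y' : Yset G v ⊆ G.neighborSet x' := Set.inter_eq_right.mp hx'Y
  have hxy' : ¬ G.Adj x y' := fun h => hy'y (hNy ▸ ⟨h, hy'Y⟩ : y' ∈ ({y} : Set (Fin n)))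
  have hiff : ∀ z ∈ G.neighborSet v \ {x, x'}, G.Adj z x' ↔ G.Adj z y := fun z hz =>
    adj_iff_adj_of_posCount_eq_two hG.1 hx hx' (mem_Yset.mp hy.2).1 (mem_Yset.mp hy'Y).1 hnadj
      hy.1 hxy' (hx'Y' hy.2) (hx'Y' hy'Y) (hYcl hy.2 hy'Y hy'y.symm)
      hz.1 (hNX ▸ hz : z ∈ G.neighborSet x ∩ _).1
  refine ⟨hiff, ?_⟩
  ext z
  by_cases hz : z ∈ ({x, x'} : Set (Fin n))
  · rcases hz with rfl | rfl
    · simp [G.adj_comm x', hnadj]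
    · simp
  · have := hiff z
    simp only [Set.mem_inter_iff, Set.mem_sdiff, SimpleGraph.mem_neighborSet] at this ⊢
    grind [G.adj_comm]

theorem Xincomplete_pendant {n s : ℕ} (hs : 2 ≤ s) (hsn : s ≤ n - 3)
    (G : SimpleGraph (Fin n)) (hconn : G.Connected) (hG : memClass s G)
    (v : Fin n) (hv : IsMinDegVertex G v)
    (X Y : Set (Fin n)) (hX : X = G.neighborSet v) (hY : Y = Yset G v)
    (hYcl : Y.Pairwise G.Adj) (hYcard : 2 ≤ Y.ncard) (hXinc : ¬ X.Pairwise G.Adj)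
    (x x' : Fin n) (hx : x ∈ X) (hx' : x' ∈ X) (hne : x ≠ x') (hnadj : ¬ G.Adj x x')
    (y : Fin n) (hNy : G.neighborSet x ∩ Y = {y}) :
    G.neighborSet x ∩ X = X \ {x, x'} ∧
    (G.neighborSet x' ∩ Y = Y →
      ((∀ z ∈ X \ ({x, x'} : Set (Fin n)), (G.Adj z x' ↔ G.Adj z y)) ∧
        G.neighborSet x' ∩ X = (G.neighborSet y ∩ X) \ {x, x'})) :=
  Xincomplete_pendant_general G hG v hv X Y hX hY hYcl hYcard x x' hx hx' hne hnadj y hNy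

end TwoPosEig
end

section
/- Let G ∈ 𝒞𝒢^s(n) with 2 ≤ s ≤ n−3 be a non-reduced X-complete graph (with respect to a minimum-degree vertex v*, X = N(v*), Y = V(G) ∖ N[v*]), and let x, x' ∈ X be non-reduced vertices. Then G ∈ 𝒢_3^s(n). -/
/-!
Inertia indices are compared through quadratic forms. In eigen-coordinates the adjacency form is
`∑ λᵢ tᵢ²`, so a subspace on which it is positive definite has dimension at most `p(G)`, and the
positive eigenvectors span one of dimension `p(G)`. Hence `p` and the number of negative
eigenvalues do not increase on induced subgraphs, and they are unchanged by deleting a vertex `z`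
with `w z ≠ 0` for some kernel vector `w`: the projection along `w` onto `{t z = 0}` preserves the
form.

Pick `y ∈ N_Y(x) ∖ N_Y(x')` and `y' ∈ N_Y(x') ∖ N_Y(x)`. The six-vertex graphs `forbidden₁` and
`forbidden₂` have three positive eigenvalues, so `G` contains neither as an induced subgraph; as
`X` and `Y` are cliques, this forces every vertex outside `{x, x', y, y'}` to be adjacent to both
or neither of `x, x'`, and likewise of `y, y'`. Thus `x x' y' y` is a congruent quadrangle,
`eₓ - eₓ' - e_y' + e_y` is a kernel vector, and deleting `y` keeps `p = 2` and lowers the nullity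
by one.
-/

open Matrix BigOperators

open Module Matrix QuadraticMap

namespace QuadraticMap

variable {ι κ : Type*} [Fintype ι] [Fintype κ]

theorem finrank_le_card_pos_of_posDef_comp {E : Type*} [AddCommGroup E] [Module ℝ E]
    [FiniteDimensional ℝ E] (μ : ι → ℝ) (g : E →ₗ[ℝ] ι → ℝ)
    (hg : ((weightedSumSquares ℝ μ).comp g).PosDef) :
    finrank ℝ E ≤ Nat.card {i // 0 < μ i} := by
  classical
  let r := (LinearMap.funLeft ℝ ℝ (Subtype.val : {i // 0 < μ i} → ι)).comp g
  have hr : Function.Injective r := by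
    rw [← LinearMap.ker_eq_bot, LinearMap.ker_eq_bot']
    intro e he
    by_contra hne
    have hle : weightedSumSquares ℝ μ (g e) ≤ 0 := by
      rw [weightedSumSquares_apply]
      refine Finset.sum_nonpos fun i _ => ?_
      by_cases hi : 0 < μ i
      · have : g e i = 0 := by
          change r e ⟨i, hi⟩ = 0
          rw [he, Pi.zero_apply]
        simp [this]
      · exact smul_nonpos_of_nonpos_of_nonneg (not_lt.mp hi) (mul_self_nonneg _)
    exact (hg e hne).not_ge hle
  simpa [Nat.card_eq_fintype_card] using LinearMap.finrank_le_finrank_of_injective hr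

theorem posDef_comp_extendByZero (μ : ι → ℝ) :
    ((weightedSumSquares ℝ μ).comp
      (Function.ExtendByZero.linearMap ℝ (Subtype.val : {i // 0 < μ i} → ι))).PosDef := by
  intro t ht
  obtain ⟨j, hj⟩ := Function.ne_iff.mp ht
  have hext : Function.extend Subtype.val t 0 j.1 = t j :=
    Subtype.val_injective.extend_apply _ _ _
  simp only [comp_apply, Function.ExtendByZero.linearMap_apply, weightedSumSquares_apply]
  refine Finset.sum_pos' (fun i _ => ?_) ⟨j, Finset.mem_univ _, ?_⟩
  · by_cases hi : 0 < μ i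
    · exact smul_nonneg hi.le (mul_self_nonneg _)
    · rw [Function.extend_apply' _ _ _ fun ⟨a, ha⟩ => hi (ha ▸ a.2)]
      simp
  · rw [hext]
    exact smul_pos j.2 (mul_self_pos.mpr hj)

theorem card_pos_le_of_comp_eq {μ : ι → ℝ} {ν : κ → ℝ} {f : (ι → ℝ) →ₗ[ℝ] κ → ℝ}
    (hf : (weightedSumSquares ℝ ν).comp f = weightedSumSquares ℝ μ) :
    Nat.card {i // 0 < μ i} ≤ Nat.card {j // 0 < ν j} := by
  classical
  have h := finrank_le_card_pos_of_posDef_comp ν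
    (f ∘ₗ Function.ExtendByZero.linearMap ℝ (Subtype.val : {i // 0 < μ i} → ι))
    fun t ht => by
      simpa [← hf] using posDef_comp_extendByZero μ t ht
  simpa [Nat.card_eq_fintype_card] using h

theorem card_neg_le_of_comp_eq {μ : ι → ℝ} {ν : κ → ℝ} {f : (ι → ℝ) →ₗ[ℝ] κ → ℝ}
    (hf : (weightedSumSquares ℝ ν).comp f = weightedSumSquares ℝ μ) :
    Nat.card {i // μ i < 0} ≤ Nat.card {j // ν j < 0} := by
  have hneg : (weightedSumSquares ℝ (-ν)).comp f = weightedSumSquares ℝ (-μ) := by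
    ext x
    simpa [weightedSumSquares_apply] using congr_arg Neg.neg (DFunLike.congr_fun hf x)
  simpa using card_pos_le_of_comp_eq hneg

end QuadraticMap

namespace Matrix

variable {R ι κ : Type*} [CommRing R] [Fintype ι] [DecidableEq ι] [Fintype κ] [DecidableEq κ]

theorem toQuadraticForm'_comp_linearCombination_single (A : Matrix ι ι R) (p : κ → ι) :
    A.toQuadraticForm'.comp (Fintype.linearCombination R fun a => Pi.single (p a) 1) =
      (A.submatrix p p).toQuadraticForm' := by
  ext t
  simp only [QuadraticMap.comp_apply, toQuadraticForm', LinearMap.BilinMap.toQuadraticMap_apply,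
    toLinearMap₂'_apply', Fintype.linearCombination_apply, mulVec_sum, sum_dotProduct,
    dotProduct_sum, mulVec_smul, smul_dotProduct, dotProduct_smul, single_dotProduct,
    mulVec_single_one, one_mul, smul_eq_mul]
  simp only [col_apply, dotProduct, mulVec, submatrix_apply, Finset.mul_sum]
  rw [Finset.sum_comm]
  exact Finset.sum_congr rfl fun _ _ => Finset.sum_congr rfl fun _ _ => by ring

theorem toQuadraticForm'_submatrix_compl_comp {K : Type*} [Field K] {A : Matrix ι ι K}
    (hA : A.IsSymm) {w : ι → K} (hw : A *ᵥ w = 0) {z : ι} (hz : w z ≠ 0) :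
    (A.submatrix (Subtype.val : ({z}ᶜ : Set ι) → ι) Subtype.val).toQuadraticForm'.comp
        (LinearMap.funLeft K K Subtype.val ∘ₗ
          (LinearMap.id - (w z)⁻¹ • (LinearMap.proj z).smulRight w)) =
      A.toQuadraticForm' := by
  ext x
  set y := x - (w z)⁻¹ • x z • w
  have hyz : y z = 0 := by
    simp only [y, Pi.sub_apply, Pi.smul_apply, smul_eq_mul]
    field_simp
    ring
  have hpush : Fintype.linearCombination K (fun a : ({z}ᶜ : Set ι) => Pi.single a.1 (1 : K))
      (fun a => y a) = y := by
    ext i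
    simp only [Fintype.linearCombination_apply, Finset.sum_apply, Pi.smul_apply, Pi.single_apply,
      smul_eq_mul, mul_ite, mul_one, mul_zero]
    by_cases hi : i = z
    · subst hi
      exact (Finset.sum_eq_zero fun a _ => if_neg fun h => a.2 h.symm).trans hyz.symm
    · rw [Finset.sum_eq_single ⟨i, hi⟩ (fun b _ hb => if_neg fun h => hb (Subtype.ext h.symm))
        (by simp), if_pos rfl]
  have hQ : A.toQuadraticForm' y = A.toQuadraticForm' x := by
    have hwx : w ⬝ᵥ A *ᵥ x = 0 := by
      rw [dotProduct_mulVec, ← hA.eq, vecMul_transpose, hw, zero_dotProduct]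
    simp only [toQuadraticForm', LinearMap.BilinMap.toQuadraticMap_apply, toLinearMap₂'_apply',
      y, mulVec_sub, mulVec_smul, hw, smul_zero, sub_zero, sub_dotProduct, smul_dotProduct, hwx]
  rw [← toQuadraticForm'_comp_linearCombination_single, QuadraticMap.comp_apply, ← hQ, ← hpush]
  rfl

end Matrix

namespace Matrix.IsHermitian

variable {ι κ : Type*} [Fintype ι] [DecidableEq ι] [Fintype κ] {A : Matrix ι ι ℝ}

noncomputable def eigenCoords (hA : A.IsHermitian) : (ι → ℝ) ≃ₗ[ℝ] ι → ℝ :=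
  UnitaryGroup.toLinearEquiv (star hA.eigenvectorUnitary)

theorem toQuadraticForm'_eq_comp (hA : A.IsHermitian) :
    A.toQuadraticForm' =
      (weightedSumSquares ℝ hA.eigenvalues).comp hA.eigenCoords.toLinearMap := by
  ext x
  set U : Matrix ι ι ℝ := (hA.eigenvectorUnitary : Matrix ι ι ℝ)
  have hxU : x ᵥ* U = star U *ᵥ x := by
    rw [star_eq_conjTranspose, conjTranspose_eq_transpose_of_trivial, mulVec_transpose]
  have hA' : A = U * diagonal hA.eigenvalues * star U := by
    conv_lhs => rw [hA.spectral_theorem]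
    simp [U, Unitary.conjStarAlgAut_apply]
  have hc : hA.eigenCoords.toLinearMap x = star U *ᵥ x := rfl
  rw [QuadraticMap.comp_apply, weightedSumSquares_apply, hc]
  simp only [toQuadraticForm', LinearMap.BilinMap.toQuadraticMap_apply, toLinearMap₂'_apply']
  conv_lhs => rw [hA', ← mulVec_mulVec, ← mulVec_mulVec, dotProduct_mulVec, hxU]
  simp only [dotProduct, mulVec_diagonal, smul_eq_mul]
  exact Finset.sum_congr rfl fun i _ => by ring

theorem card_pos_add_card_neg_add_card_zero (hA : A.IsHermitian) :
    Nat.card {i // 0 < hA.eigenvalues i} + Nat.card {i // hA.eigenvalues i < 0} +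
      Nat.card {i // hA.eigenvalues i = 0} = Fintype.card ι := by
  classical
  simp only [Nat.card_eq_fintype_card, Fintype.card_subtype]
  rw [← Finset.card_union_of_disjoint, ← Finset.card_union_of_disjoint, ← Finset.card_univ]
  · congr 1
    ext i
    simp only [Finset.mem_union, Finset.mem_filter, Finset.mem_univ, true_and, iff_true]
    grind
  · simp only [Finset.disjoint_left, Finset.mem_union, Finset.mem_filter]
    grind
  · simp only [Finset.disjoint_left, Finset.mem_filter]
    grind

section WeightedSumSquares

variable {d : κ → ℝ} {g : (κ → ℝ) →ₗ[ℝ] ι → ℝ}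

theorem card_pos_le_card_pos_eigenvalues (hA : A.IsHermitian)
    (hg : A.toQuadraticForm'.comp g = weightedSumSquares ℝ d) :
    Nat.card {k // 0 < d k} ≤ Nat.card {i // 0 < hA.eigenvalues i} :=
  card_pos_le_of_comp_eq (f := hA.eigenCoords.toLinearMap ∘ₗ g) <| by
    rw [← hg, toQuadraticForm'_eq_comp]
    rfl

theorem card_neg_le_card_neg_eigenvalues (hA : A.IsHermitian)
    (hg : A.toQuadraticForm'.comp g = weightedSumSquares ℝ d) :
    Nat.card {k // d k < 0} ≤ Nat.card {i // hA.eigenvalues i < 0} :=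
  card_neg_le_of_comp_eq (f := hA.eigenCoords.toLinearMap ∘ₗ g) <| by
    rw [← hg, toQuadraticForm'_eq_comp]
    rfl

end WeightedSumSquares

section Comparison

variable [DecidableEq κ] {B : Matrix κ κ ℝ} {f : (ι → ℝ) →ₗ[ℝ] κ → ℝ}

theorem toQuadraticForm'_comp_comp_eigenCoords_symm (hA : A.IsHermitian)
    (hf : B.toQuadraticForm'.comp f = A.toQuadraticForm') :
    B.toQuadraticForm'.comp (f ∘ₗ hA.eigenCoords.symm.toLinearMap) =
      weightedSumSquares ℝ hA.eigenvalues := by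
  ext t
  have h := DFunLike.congr_fun hf (hA.eigenCoords.symm t)
  rw [hA.toQuadraticForm'_eq_comp] at h
  simpa using h

theorem card_pos_eigenvalues_le_of_comp_eq (hA : A.IsHermitian) (hB : B.IsHermitian)
    (hf : B.toQuadraticForm'.comp f = A.toQuadraticForm') :
    Nat.card {i // 0 < hA.eigenvalues i} ≤ Nat.card {j // 0 < hB.eigenvalues j} :=
  hB.card_pos_le_card_pos_eigenvalues (hA.toQuadraticForm'_comp_comp_eigenCoords_symm hf)

theorem card_neg_eigenvalues_le_of_comp_eq (hA : A.IsHermitian) (hB : B.IsHermitian)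
    (hf : B.toQuadraticForm'.comp f = A.toQuadraticForm') :
    Nat.card {i // hA.eigenvalues i < 0} ≤ Nat.card {j // hB.eigenvalues j < 0} :=
  hB.card_neg_le_card_neg_eigenvalues (hA.toQuadraticForm'_comp_comp_eigenCoords_symm hf)

end Comparison

end Matrix.IsHermitian

namespace TwoPosEig

variable {V W : Type*}

noncomputable def negCount [Finite V] (G : SimpleGraph V) : ℕ :=
  letI := Fintype.ofFinite V
  letI := Classical.decEq V
  Nat.card {i : V // eigs G i < 0}

section Fintype

variable [Fintype V] [DecidableEq V]

theorem posCount_eq (G : SimpleGraph V) : posCount G = Nat.card {i // 0 < eigs G i} := by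
  unfold posCount
  congr!

theorem negCount_eq (G : SimpleGraph V) : negCount G = Nat.card {i // eigs G i < 0} := by
  unfold negCount
  congr!

theorem nullCount_eq (G : SimpleGraph V) : nullCount G = Nat.card {i // eigs G i = 0} := by
  unfold nullCount
  congr!

theorem adjMat_apply (G : SimpleGraph V) [DecidableRel G.Adj] (i j : V) :
    adjMat G i j = if G.Adj i j then 1 else 0 := by
  unfold adjMat
  rw [SimpleGraph.adjMatrix_apply]
  congr!

theorem adjMat_isSymm (G : SimpleGraph V) : (adjMat G).IsSymm := by
  rw [IsSymm, ← conjTranspose_eq_transpose_of_trivial]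
  exact (adjMat_isHermitian G).eq

theorem adjMat_submatrix_of_adj_iff [Fintype W] [DecidableEq W] {G : SimpleGraph V}
    {H : SimpleGraph W} {p : W → V} (hp : ∀ a b, G.Adj (p a) (p b) ↔ H.Adj a b) :
    (adjMat G).submatrix p p = adjMat H := by
  classical
  ext a b
  simp [adjMat_apply, hp]

end Fintype

section Finite

variable [Finite V] [Finite W]

theorem posCount_add_negCount_add_nullCount (G : SimpleGraph V) :
    posCount G + negCount G + nullCount G = Nat.card V := by
  have := Fintype.ofFinite V
  classical
  rw [posCount_eq, negCount_eq, nullCount_eq, Nat.card_eq_fintype_card (α := V)]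
  exact (adjMat_isHermitian G).card_pos_add_card_neg_add_card_zero

theorem posCount_le_of_adj_iff {G : SimpleGraph V} {H : SimpleGraph W} (p : W → V)
    (hp : ∀ a b, G.Adj (p a) (p b) ↔ H.Adj a b) : posCount H ≤ posCount G := by
  have := Fintype.ofFinite V
  have := Fintype.ofFinite W
  classical
  rw [posCount_eq, posCount_eq]
  refine (adjMat_isHermitian H).card_pos_eigenvalues_le_of_comp_eq (adjMat_isHermitian G)
    (f := Fintype.linearCombination ℝ fun a => Pi.single (p a) 1) ?_
  rw [toQuadraticForm'_comp_linearCombination_single, adjMat_submatrix_of_adj_iff hp]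

theorem negCount_le_of_adj_iff {G : SimpleGraph V} {H : SimpleGraph W} (p : W → V)
    (hp : ∀ a b, G.Adj (p a) (p b) ↔ H.Adj a b) : negCount H ≤ negCount G := by
  have := Fintype.ofFinite V
  have := Fintype.ofFinite W
  classical
  rw [negCount_eq, negCount_eq]
  refine (adjMat_isHermitian H).card_neg_eigenvalues_le_of_comp_eq (adjMat_isHermitian G)
    (f := Fintype.linearCombination ℝ fun a => Pi.single (p a) 1) ?_
  rw [toQuadraticForm'_comp_linearCombination_single, adjMat_submatrix_of_adj_iff hp]

end Finite

section Deletion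

variable [Fintype V] [DecidableEq V] {G : SimpleGraph V} {w : V → ℝ} {z : V}

theorem toQuadraticForm'_adjMat_induce_compl_comp (hw : adjMat G *ᵥ w = 0) (hz : w z ≠ 0) :
    (adjMat (G.induce {z}ᶜ)).toQuadraticForm'.comp
        (LinearMap.funLeft ℝ ℝ Subtype.val ∘ₗ
          (LinearMap.id - (w z)⁻¹ • (LinearMap.proj z).smulRight w)) =
      (adjMat G).toQuadraticForm' := by
  rw [← adjMat_submatrix_of_adj_iff (p := Subtype.val) fun _ _ => Iff.rfl]
  exact toQuadraticForm'_submatrix_compl_comp (adjMat_isSymm G) hw hz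

theorem posCount_induce_compl_singleton (hw : adjMat G *ᵥ w = 0) (hz : w z ≠ 0) :
    posCount (G.induce {z}ᶜ) = posCount G := by
  refine le_antisymm (posCount_le_of_adj_iff Subtype.val fun _ _ => Iff.rfl) ?_
  rw [posCount_eq, posCount_eq]
  exact (adjMat_isHermitian G).card_pos_eigenvalues_le_of_comp_eq (adjMat_isHermitian _)
    (toQuadraticForm'_adjMat_induce_compl_comp hw hz)

theorem negCount_induce_compl_singleton (hw : adjMat G *ᵥ w = 0) (hz : w z ≠ 0) :
    negCount (G.induce {z}ᶜ) = negCount G := by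
  refine le_antisymm (negCount_le_of_adj_iff Subtype.val fun _ _ => Iff.rfl) ?_
  rw [negCount_eq, negCount_eq]
  exact (adjMat_isHermitian G).card_neg_eigenvalues_le_of_comp_eq (adjMat_isHermitian _)
    (toQuadraticForm'_adjMat_induce_compl_comp hw hz)

theorem memClass_induce_compl_singleton {s : ℕ} (hG : memClass s G) (hw : adjMat G *ᵥ w = 0)
    (hz : w z ≠ 0) : memClass (s - 1) (G.induce {z}ᶜ) := by
  obtain ⟨hpos, hnull⟩ := hG
  have hcard : Nat.card ({z}ᶜ : Set V) + 1 = Nat.card V := by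
    rw [Nat.card_coe_set_eq, ← Set.ncard_add_ncard_compl {z}, Set.ncard_singleton, add_comm]
  have hG := posCount_add_negCount_add_nullCount G
  have hGz := posCount_add_negCount_add_nullCount (G.induce {z}ᶜ)
  rw [posCount_induce_compl_singleton hw hz, negCount_induce_compl_singleton hw hz] at hGz
  exact ⟨by rw [posCount_induce_compl_singleton hw hz, hpos], by omega⟩

end Deletion

def forbidden₁ : SimpleGraph (Fin 6) :=
  SimpleGraph.fromEdgeSet
    {s(0, 1), s(0, 2), s(1, 2), s(1, 3), s(1, 5), s(2, 4), s(3, 4), s(3, 5), s(4, 5)}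

def forbidden₂ : SimpleGraph (Fin 6) :=
  SimpleGraph.fromEdgeSet
    {s(0, 1), s(0, 2), s(0, 3), s(1, 2), s(1, 3), s(2, 3), s(1, 4), s(2, 5), s(3, 4), s(4, 5)}

instance : DecidableRel forbidden₁.Adj := by unfold forbidden₁; infer_instance

instance : DecidableRel forbidden₂.Adj := by unfold forbidden₂; infer_instance

theorem three_le_posCount_forbidden₁ : 3 ≤ posCount forbidden₁ := by
  rw [posCount_eq]
  have h := (adjMat_isHermitian forbidden₁).card_pos_le_card_pos_eigenvalues
    (d := fun _ : Fin 3 => (2 : ℝ))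
    (g := toLin' !![0, 1, 0; 0, 2, 1; 0, -1, -2; 1, 0, 1; 0, -2, -2; 1, 0, 1]) (by
      ext t
      simp +decide [toQuadraticForm', toLinearMap₂'_apply', weightedSumSquares_apply, dotProduct,
        mulVec, Fin.sum_univ_succ, adjMat_apply]
      ring)
  simpa [eigs] using h

theorem three_le_posCount_forbidden₂ : 3 ≤ posCount forbidden₂ := by
  rw [posCount_eq]
  have h := (adjMat_isHermitian forbidden₂).card_pos_le_card_pos_eigenvalues
    (d := fun _ : Fin 3 => (2 : ℝ))
    (g := toLin' !![0, 1, 0; 0, 0, 1; 0, 1, -2; 1, 0, 1; 1, -2, 1; 0, 0, -2]) (by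
      ext t
      simp +decide [toQuadraticForm', toLinearMap₂'_apply', weightedSumSquares_apply, dotProduct,
        mulVec, Fin.sum_univ_succ, adjMat_apply]
      ring)
  simpa [eigs] using h

section Forbidden

variable [Finite V] {G : SimpleGraph V}

theorem adj_of_posCount_le_two_of_forbidden₁ (hG : posCount G ≤ 2) {v x x' y y' u : V}
    (hvx : G.Adj v x) (hvx' : G.Adj v x') (hxx' : G.Adj x x') (hxy : G.Adj x y)
    (hx'y' : G.Adj x' y') (hyy' : G.Adj y y') (hyu : G.Adj y u) (hy'u : G.Adj y' u)
    (hvy : ¬G.Adj v y) (hvy' : ¬G.Adj v y') (hvu : ¬G.Adj v u) (hxy' : ¬G.Adj x y')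
    (hx'y : ¬G.Adj x' y) (hxu : G.Adj x u) : G.Adj x' u := by
  by_contra hx'u
  have : 3 ≤ posCount G :=
    three_le_posCount_forbidden₁.trans (posCount_le_of_adj_iff ![v, x, x', y, y', u] ?_)
  · omega
  intro a b
  fin_cases a <;> fin_cases b <;> simp +decide [*, G.adj_comm]

theorem adj_of_posCount_le_two_of_forbidden₂ (hG : posCount G ≤ 2) {v x x' z y y' : V}
    (hvx : G.Adj v x) (hvx' : G.Adj v x') (hvz : G.Adj v z) (hxx' : G.Adj x x')
    (hxz : G.Adj x z) (hx'z : G.Adj x' z) (hxy : G.Adj x y) (hx'y' : G.Adj x' y')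
    (hyy' : G.Adj y y') (hvy : ¬G.Adj v y) (hvy' : ¬G.Adj v y') (hxy' : ¬G.Adj x y')
    (hx'y : ¬G.Adj x' y) (hzy : G.Adj z y) : G.Adj z y' := by
  by_contra hzy'
  have : 3 ≤ posCount G :=
    three_le_posCount_forbidden₂.trans (posCount_le_of_adj_iff ![v, x, x', z, y, y'] ?_)
  · omega
  intro a b
  fin_cases a <;> fin_cases b <;> simp +decide [*, G.adj_comm]

end Forbidden

section Congruent

variable {G : SimpleGraph V}

theorem CongruentQuad.of_adj_iff {u v x y : V} (huv : G.Adj u v) (hvx : G.Adj v x)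
    (hxy : G.Adj x y) (hyu : G.Adj y u) (hux : ¬G.Adj u x) (hvy : ¬G.Adj v y) (hux' : u ≠ x)
    (hvy' : v ≠ y) (hu : ∀ w, w ≠ u → w ≠ v → w ≠ x → w ≠ y → (G.Adj u w ↔ G.Adj v w))
    (hx : ∀ w, w ≠ u → w ≠ v → w ≠ x → w ≠ y → (G.Adj x w ↔ G.Adj y w)) :
    CongruentQuad G u v x y := by
  refine ⟨huv.ne, hux', hyu.ne', hvx.ne, hvy', hxy.ne, huv, hvx, hxy, hyu, hux, hvy, ?_, ?_⟩ <;>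
    ext w <;>
    simp only [Set.mem_sdiff, SimpleGraph.mem_neighborSet, Set.mem_insert_iff,
      Set.mem_singleton_iff] <;>
    by_cases hw : w = u ∨ w = v ∨ w = x ∨ w = y
  · rcases hw with rfl | rfl | rfl | rfl <;> simp_all [G.adj_comm]
  · grind
  · rcases hw with rfl | rfl | rfl | rfl <;> simp_all [G.adj_comm]
  · grind

theorem CongruentQuad.adjMat_mulVec_eq_zero [Fintype V] [DecidableEq V] {u v x y : V}
    (h : CongruentQuad G u v x y) :
    adjMat G *ᵥ (Pi.single u 1 - Pi.single v 1 - Pi.single x 1 + Pi.single y 1) = 0 := by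
  classical
  obtain ⟨-, -, -, -, -, -, huv, hvx, hxy, hyu, hux, hvy, hN₁, hN₂⟩ := h
  ext i
  have h₁ := Set.ext_iff.mp hN₁ i
  have h₂ := Set.ext_iff.mp hN₂ i
  simp only [Set.mem_sdiff, SimpleGraph.mem_neighborSet, Set.mem_insert_iff,
    Set.mem_singleton_iff] at h₁ h₂
  simp only [mulVec_add, mulVec_sub, mulVec_single_one, Pi.add_apply, Pi.sub_apply, col_apply,
    adjMat_apply, Pi.zero_apply]
  split_ifs <;> grind [SimpleGraph.Adj.symm, SimpleGraph.irrefl]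

theorem mem_Yset_iff {v w : V} : w ∈ Yset G v ↔ w ≠ v ∧ ¬G.Adj v w := by
  simp [Yset]

theorem eq_or_adj_or_mem_Yset (v w : V) : w = v ∨ G.Adj v w ∨ w ∈ Yset G v := by
  rw [mem_Yset_iff]
  tauto

theorem congruentQuad_of_not_nested [Finite V] (hG : posCount G ≤ 2) {v x x' y y' : V}
    (hX : (G.neighborSet v).Pairwise G.Adj) (hY : (Yset G v).Pairwise G.Adj)
    (hx : G.Adj v x) (hx' : G.Adj v x') (hy : y ∈ Yset G v) (hy' : y' ∈ Yset G v)
    (hxy : G.Adj x y) (hx'y : ¬G.Adj x' y) (hx'y' : G.Adj x' y') (hxy' : ¬G.Adj x y') :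
    CongruentQuad G x x' y' y := by
  have hvy := (mem_Yset_iff.mp hy).2
  have hvy' := (mem_Yset_iff.mp hy').2
  have hxx' : G.Adj x x' := hX hx hx' fun h => hx'y (h ▸ hxy)
  have hyy' : G.Adj y y' := hY hy hy' fun h => hxy' (h ▸ hxy)
  refine CongruentQuad.of_adj_iff hxx' hx'y' hyy'.symm hxy.symm hxy'
    hx'y (fun h => hvy' (h ▸ hx)) (fun h => hvy (h ▸ hx')) (fun w hwx hwx' hwy' hwy => ?_)
    (fun w hwx hwx' hwy' hwy => ?_)
  · rcases eq_or_adj_or_mem_Yset v w with rfl | hw | hw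
    · exact iff_of_true hx.symm hx'.symm
    · exact iff_of_true (hX hx hw hwx.symm) (hX hx' hw hwx'.symm)
    · have hvw := (mem_Yset_iff.mp hw).2
      have hyw : G.Adj y w := hY hy hw hwy.symm
      have hy'w : G.Adj y' w := hY hy' hw hwy'.symm
      exact ⟨adj_of_posCount_le_two_of_forbidden₁ hG hx hx' hxx' hxy hx'y' hyy' hyw hy'w hvy hvy'
          hvw hxy' hx'y,
        adj_of_posCount_le_two_of_forbidden₁ hG hx' hx hxx'.symm hx'y' hxy hyy'.symm hy'w hyw hvy'
          hvy hvw hx'y hxy'⟩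
  · rcases eq_or_adj_or_mem_Yset v w with rfl | hw | hw
    · exact iff_of_false (fun h => hvy' h.symm) (fun h => hvy h.symm)
    · have hxw : G.Adj x w := hX hx hw hwx.symm
      have hx'w : G.Adj x' w := hX hx' hw hwx'.symm
      rw [G.adj_comm y', G.adj_comm y]
      exact ⟨adj_of_posCount_le_two_of_forbidden₂ hG hx' hx hw hxx'.symm hx'w hxw hx'y' hxy
          hyy'.symm hvy' hvy hx'y hxy',
        adj_of_posCount_le_two_of_forbidden₂ hG hx hx' hw hxx' hxw hx'w hxy hx'y' hyy' hvy hvy'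
          hxy' hx'y⟩
    · exact iff_of_true (hY hy' hw hwy'.symm) (hY hy hw hwy.symm)

end Congruent

theorem nonreduced_Xcomplete_in_G3_general {n s : ℕ}
    (G : SimpleGraph (Fin n)) (hconn : G.Connected) (hG : memClass s G) (v : Fin n)
    (X Y : Set (Fin n)) (hX : X = G.neighborSet v) (hY : Y = Yset G v)
    (hXc : IsXComplete G v)
    (x x' : Fin n) (hx : x ∈ X) (hx' : x' ∈ X)
    (h1 : ((G.neighborSet x ∩ Y) \ (G.neighborSet x' ∩ Y)).Nonempty)
    (h2 : ((G.neighborSet x' ∩ Y) \ (G.neighborSet x ∩ Y)).Nonempty) :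
    memG3 s G := by
  subst hX hY
  obtain ⟨y, ⟨hxy, hy⟩, hx'y⟩ := h1
  obtain ⟨y', ⟨hx'y', hy'⟩, hxy'⟩ := h2
  have hquad : CongruentQuad G x x' y' y :=
    congruentQuad_of_not_nested hG.1.le hXc.2.2 hXc.2.1 hx hx' hy hy' hxy
      (fun h => hx'y ⟨h, hy⟩) hx'y' (fun h => hxy' ⟨h, hy'⟩)
  refine ⟨hconn, y, ⟨x, x', y', y, hquad, by simp⟩,
    memClass_induce_compl_singleton hG hquad.adjMat_mulVec_eq_zero ?_⟩
  obtain ⟨-, -, hxy, -, hx'y, hy'y, -⟩ := hquad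
  simp [hxy.symm, hx'y.symm, hy'y.symm]

theorem nonreduced_Xcomplete_in_G3 {n s : ℕ} (hs : 2 ≤ s) (hsn : s ≤ n - 3)
    (G : SimpleGraph (Fin n)) (hconn : G.Connected) (hG : memClass s G)
    (v : Fin n) (hv : IsMinDegVertex G v)
    (X Y : Set (Fin n)) (hX : X = G.neighborSet v) (hY : Y = Yset G v)
    (hXc : IsXComplete G v)
    (x x' : Fin n) (hx : x ∈ X) (hx' : x' ∈ X)
    (h1 : ((G.neighborSet x ∩ Y) \ (G.neighborSet x' ∩ Y)).Nonempty)
    (h2 : ((G.neighborSet x' ∩ Y) \ (G.neighborSet x ∩ Y)).Nonempty) :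
    memG3 s G :=
  nonreduced_Xcomplete_in_G3_general G hconn hG v X Y hX hY hXc x x' hx hx' h1 h2

end TwoPosEig
end

section
/- Every graph G ∈ 𝓓* satisfies λ_5(G) < 0, i.e., η(G) = 2. Consequently, for 3 ≤ s ≤ n−3 there is no graph in 𝓓* with nullity s, and hence no reduced X-complete graph lies in 𝒞𝒢^s(n) for any 3 ≤ s ≤ n−3. -/
open Matrix BigOperators

namespace TwoPosEig

variable {V : Type*}

/-! Both claims rest on one bound: if the vertices split into two cliques `s` and `sᶜ` whose
traces `N(a) ∩ sᶜ`, `a ∈ s`, form a chain, then the nullity is at most `2`. Indeed, a kernel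
vector `x` summing to zero on `s` and on `sᶜ` satisfies `x a = ∑_{N(a) ∖ s} x` for `a ∈ s` and
`x b = -∑_{s ∖ N(b)} x` for `b ∉ s`; substituting the second identity into the first expresses
`x a` through values at vertices of `s` with strictly smaller trace, so `x = 0` by induction,
and the kernel embeds in `ℝ²` through the two partial sums.

A reduced `X`-complete graph has such a split with `s = N[v*]`, so its nullity cannot be `≥ 3`.
So does `B_k(n₁, …, n_k)`, with `s` the blow-up of `v₁, …, v_⌈k/2⌉`; there `λ₃ = λ₄ = 0` forces
nullity exactly `2`. Since the trace vanishes, a graph with an edge has a negative eigenvalue,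
and in the sorted spectrum it lies after the two zeros at positions `3, 4`: hence `λ₅ < 0`. -/

lemma count_drop_four_add_two_le {α : Type*} [DecidableEq α] {l : List α} {a : α}
    (hl : 3 < l.length) (h2 : l[2] = a) (h3 : l[3] = a) :
    (l.drop 4).count a + 2 ≤ l.count a := by
  have hdrop : l.drop 2 = a :: a :: l.drop 4 := by
    rw [List.drop_eq_getElem_cons (by omega), List.drop_eq_getElem_cons hl, h2, h3]
  have := (List.drop_sublist 2 l).count_le a
  rw [hdrop] at this
  simp only [List.count_cons_self] at this
  omega

lemma getElem_four_neg {l : List ℝ} (hl : l.Pairwise (· ≥ ·)) (hlen : 3 < l.length)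
    (h2 : l[2] = 0) (h3 : l[3] = 0) (hcount : l.count 0 ≤ 2) (hneg : ∃ x ∈ l, x < 0) :
    ∃ h : 4 < l.length, l[4] < 0 := by
  have hrel := List.pairwise_iff_getElem.mp hl
  obtain ⟨x, hx, hx0⟩ := hneg
  obtain ⟨i, hi, rfl⟩ := List.getElem_of_mem hx
  have hlen4 : 4 < l.length := by
    by_contra! h
    have : l[3] ≤ l[i] := by
      rcases Nat.lt_or_ge i 3 with hi3 | hi3
      · exact hrel i 3 hi hlen hi3
      · simp [show i = 3 by omega]
    linarith
  have hne : l[4] ≠ 0 := by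
    intro h4
    have hmem : l[4] ∈ l.drop 4 := List.drop_eq_getElem_cons hlen4 ▸ List.mem_cons_self
    have := count_drop_four_add_two_le hlen h2 h3
    have := List.count_pos_iff.mpr (h4 ▸ hmem)
    omega
  exact ⟨hlen4, lt_of_le_of_ne (h3 ▸ hrel 3 4 hlen hlen4 (by norm_num)) hne⟩

section Spectrum

variable [Fintype V] [DecidableEq V] (G : SimpleGraph V)

lemma adjMat_eq_adjMatrix [DecidableRel G.Adj] : adjMat G = G.adjMatrix ℝ := by
  unfold adjMat
  congr

lemma sum_neighborFinset_eq_zero [DecidableRel G.Adj] {x : V → ℝ} (hx : adjMat G *ᵥ x = 0)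
    (u : V) : ∑ w ∈ G.neighborFinset u, x w = 0 := by
  simpa [adjMat_eq_adjMatrix] using congrFun hx u

lemma nullCount_eq_card : nullCount G = Fintype.card {i // eigs G i = 0} := by
  unfold nullCount
  rw [Subsingleton.elim (Fintype.ofFinite V) ‹_›, Subsingleton.elim (Classical.decEq V) ‹_›,
    Nat.card_eq_fintype_card]

lemma nullCount_eq_finrank_ker :
    nullCount G = Module.finrank ℝ (LinearMap.ker (adjMat G).mulVecLin) := by
  have hrank := (adjMat_isHermitian G).rank_eq_card_non_zero_eigs
  have hsplit := Fintype.card_subtype_compl (fun i => eigs G i = 0)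
  have hzero : Fintype.card {i // eigs G i = 0} ≤ Fintype.card V := Fintype.card_subtype_le _
  have hker := LinearMap.finrank_range_add_finrank_ker (adjMat G).mulVecLin
  rw [Module.finrank_fintype_fun_eq_card] at hker
  rw [Matrix.rank] at hrank
  simp only [ne_eq] at hrank
  rw [nullCount_eq_card]
  unfold eigs at hsplit hzero ⊢
  omega

noncomputable def eigList : List ℝ :=
  ((Finset.univ.val.map (eigs G)).sort (· ≤ ·)).reverse

lemma lam_eq_getD (k : ℕ) : lam G k = (eigList G).getD (k - 1) 0 := by
  unfold lam
  rw [Subsingleton.elim (Fintype.ofFinite V) ‹_›, Subsingleton.elim (Classical.decEq V) ‹_›]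
  rfl

lemma length_eigList : (eigList G).length = Fintype.card V := by
  simp [eigList]

lemma pairwise_eigList : (eigList G).Pairwise (· ≥ ·) :=
  List.pairwise_reverse.mpr (Multiset.pairwise_sort _ _)

lemma mem_eigList {x : ℝ} : x ∈ eigList G ↔ ∃ i, eigs G i = x := by
  simp [eigList]

lemma count_zero_eigList : (eigList G).count 0 = nullCount G := by
  rw [nullCount_eq_card, Fintype.card_subtype, eigList, List.count_reverse, ← Multiset.coe_count,
    Multiset.sort_eq, Multiset.count_map]
  simp only [eq_comm (a := (0 : ℝ))]
  rfl

end Spectrum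

lemma exists_eigs_neg [Fintype V] [DecidableEq V] {G : SimpleGraph V} (hG : G ≠ ⊥) :
    ∃ i, eigs G i < 0 := by
  classical
  by_contra! hnonneg
  have htrace : ∑ i, eigs G i = 0 := by
    have htr : (adjMat G).trace = 0 := by
      rw [adjMat_eq_adjMatrix, SimpleGraph.trace_adjMatrix]
    simpa [eigs, htr] using ((adjMat_isHermitian G).trace_eq_sum_eigenvalues).symm
  have hzero : adjMat G = 0 := (adjMat_isHermitian G).eigenvalues_eq_zero_iff.mp <|
    funext fun i => (Finset.sum_eq_zero_iff_of_nonneg fun i _ => hnonneg i).mp htrace i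
      (Finset.mem_univ i)
  obtain ⟨u, v, huv⟩ := SimpleGraph.ne_bot_iff_exists_adj.mp hG
  simpa [adjMat_eq_adjMatrix, huv] using congrFun (congrFun hzero u) v

section Eigenvalues

variable [Finite V] {G : SimpleGraph V}

theorem two_le_nullCount (hV : 4 ≤ Nat.card V) (h3 : lam G 3 = 0) (h4 : lam G 4 = 0) :
    2 ≤ nullCount G := by
  have := Fintype.ofFinite V
  classical
  have hlen : 3 < (eigList G).length := by
    rw [length_eigList, ← Nat.card_eq_fintype_card]; omega
  rw [lam_eq_getD, List.getD_eq_getElem _ _ (by omega)] at h3 h4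
  rw [← count_zero_eigList]
  have := count_drop_four_add_two_le hlen h3 h4
  omega

theorem lam_five_neg (hG : G ≠ ⊥) (hV : 4 ≤ Nat.card V) (hnull : nullCount G ≤ 2)
    (h3 : lam G 3 = 0) (h4 : lam G 4 = 0) : lam G 5 < 0 := by
  have := Fintype.ofFinite V
  classical
  have hlen : 3 < (eigList G).length := by
    rw [length_eigList, ← Nat.card_eq_fintype_card]; omega
  rw [lam_eq_getD, List.getD_eq_getElem _ _ (by omega)] at h3 h4
  obtain ⟨i, hi⟩ := exists_eigs_neg hG
  obtain ⟨hlen5, h5⟩ := getElem_four_neg (pairwise_eigList G) hlen h3 h4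
    (count_zero_eigList G ▸ hnull) ⟨_, (mem_eigList G).mpr ⟨i, rfl⟩, hi⟩
  rwa [lam_eq_getD, List.getD_eq_getElem _ _ hlen5]

end Eigenvalues

def IsNestedCliqueSplit (G : SimpleGraph V) (s : Set V) : Prop :=
  s.Pairwise G.Adj ∧ sᶜ.Pairwise G.Adj ∧
    ∀ a ∈ s, ∀ b ∈ s, G.neighborSet a ∩ sᶜ ⊆ G.neighborSet b ∩ sᶜ ∨
      G.neighborSet b ∩ sᶜ ⊆ G.neighborSet a ∩ sᶜ

section Kernel

variable [Fintype V] [DecidableEq V] {G : SimpleGraph V} [DecidableRel G.Adj]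

lemma eq_sum_neighborFinset_sdiff_of_mem_clique {t : Finset V}
    (ht : (t : Set V).Pairwise G.Adj) {x : V → ℝ} (hx : adjMat G *ᵥ x = 0)
    (hxt : ∑ w ∈ t, x w = 0) {u : V} (hu : u ∈ t) :
    x u = ∑ w ∈ G.neighborFinset u \ t, x w := by
  have hinter : G.neighborFinset u ∩ t = t.erase u := by
    ext w
    simp only [Finset.mem_inter, SimpleGraph.mem_neighborFinset, Finset.mem_erase]
    exact ⟨fun ⟨huw, hw⟩ => ⟨huw.ne.symm, hw⟩, fun ⟨hwu, hw⟩ => ⟨ht hu hw hwu.symm, hw⟩⟩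
  have hrow := sum_neighborFinset_eq_zero G hx u
  rw [← Finset.sum_inter_add_sum_sdiff (G.neighborFinset u) t, hinter,
    Finset.sum_erase_eq_sub hu] at hrow
  linarith

theorem IsNestedCliqueSplit.eq_zero_of_mulVec_eq_zero {s : Finset V}
    (hG : IsNestedCliqueSplit G s) {x : V → ℝ} (hx : adjMat G *ᵥ x = 0)
    (hs : ∑ v ∈ s, x v = 0) (hsc : ∑ v ∈ sᶜ, x v = 0) : x = 0 := by
  obtain ⟨hcs, hcsc, hchain⟩ := hG
  have hcoe : ∀ c, (↑(G.neighborFinset c \ s) : Set V) = G.neighborSet c ∩ (↑s)ᶜ := by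
    simp [Set.sdiff_eq]
  have hout : ∀ a ∈ s, x a = ∑ w ∈ G.neighborFinset a \ s, x w := fun a ha =>
    eq_sum_neighborFinset_sdiff_of_mem_clique hcs hx hs ha
  have hin : ∀ b ∉ s, x b = -∑ a ∈ s \ G.neighborFinset b, x a := fun b hb => by
    have := eq_sum_neighborFinset_sdiff_of_mem_clique (t := sᶜ) (by simpa using hcsc) hx hsc
      (Finset.mem_compl.mpr hb)
    rw [sdiff_compl, Finset.inf_eq_inter, Finset.inter_comm] at this
    linarith [Finset.sum_inter_add_sum_sdiff s (G.neighborFinset b) x]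
  have hzero_s : ∀ a ∈ s, x a = 0 := by
    intro a
    induction hn : (G.neighborFinset a \ s).card using Nat.strong_induction_on generalizing a with
    | _ n ih =>
    intro ha
    rw [hout a ha]
    refine Finset.sum_eq_zero fun b hb => ?_
    obtain ⟨-, hbs⟩ := Finset.mem_sdiff.mp hb
    rw [hin b hbs, neg_eq_zero]
    refine Finset.sum_eq_zero fun a' ha' => ?_
    obtain ⟨ha's, ha'b⟩ := Finset.mem_sdiff.mp ha'
    refine ih _ ?_ a' rfl ha's
    have hba' : b ∉ G.neighborFinset a' := by simpa [SimpleGraph.adj_comm] using ha'b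
    have hss : G.neighborFinset a' \ s ⊂ G.neighborFinset a \ s := by
      rcases hchain a' ha's a ha with h | h <;>
        rw [← hcoe, ← hcoe, Finset.coe_subset] at h
      · exact (Finset.ssubset_iff_of_subset h).mpr
          ⟨b, hb, fun h' => hba' (Finset.mem_sdiff.mp h').1⟩
      · exact absurd (Finset.mem_sdiff.mp (h hb)).1 hba'
    exact hn ▸ Finset.card_lt_card hss
  funext v
  by_cases hv : v ∈ s
  · exact hzero_s v hv
  · rw [Pi.zero_apply, hin v hv, neg_eq_zero]
    exact Finset.sum_eq_zero fun a ha => hzero_s a (Finset.mem_sdiff.mp ha).1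

end Kernel

theorem IsNestedCliqueSplit.finrank_ker_le_two [Fintype V] [DecidableEq V] {G : SimpleGraph V}
    {s : Set V} (hG : IsNestedCliqueSplit G s) :
    Module.finrank ℝ (LinearMap.ker (adjMat G).mulVecLin) ≤ 2 := by
  classical
  let sums : (V → ℝ) →ₗ[ℝ] ℝ × ℝ :=
    (∑ v ∈ s.toFinset, LinearMap.proj v).prod (∑ v ∈ s.toFinsetᶜ, LinearMap.proj v)
  have hinj : Function.Injective (sums ∘ₗ (LinearMap.ker (adjMat G).mulVecLin).subtype) := by
    rw [← LinearMap.ker_eq_bot, LinearMap.ker_eq_bot']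
    rintro ⟨x, hx⟩ hsums
    simp only [LinearMap.coe_comp, Submodule.coe_subtype, Function.comp_apply,
      LinearMap.prod_apply, LinearMap.coe_sum, LinearMap.coe_proj, Function.prod_apply,
      Finset.sum_apply, Function.eval, Prod.mk_eq_zero, sums] at hsums
    exact Subtype.ext <| IsNestedCliqueSplit.eq_zero_of_mulVec_eq_zero (s := s.toFinset)
      (by rwa [Set.coe_toFinset]) hx hsums.1 hsums.2
  simpa using LinearMap.finrank_le_finrank_of_injective hinj

theorem IsNestedCliqueSplit.nullCount_le_two [Finite V] {G : SimpleGraph V} {s : Set V}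
    (hG : IsNestedCliqueSplit G s) : nullCount G ≤ 2 := by
  have := Fintype.ofFinite V
  classical
  exact nullCount_eq_finrank_ker G ▸ hG.finrank_ker_le_two

section LexProd

variable {G : SimpleGraph V} {t : V → ℕ}

lemma lexProd_adj {a b : Σ v, Fin (t v)} :
    (lexProd G t).Adj a b ↔ a ≠ b ∧ (a.1 = b.1 ∨ G.Adj a.1 b.1) := by
  simp only [lexProd, SimpleGraph.fromRel_adj, eq_comm (a := b.1), G.adj_comm b.1, or_self]

lemma pairwise_adj_lexProd_preimage_fst {S : Set V} (hS : S.Pairwise G.Adj) :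
    (Sigma.fst ⁻¹' S : Set (Σ v, Fin (t v))).Pairwise (lexProd G t).Adj := by
  intro a ha b hb hab
  refine lexProd_adj.mpr ⟨hab, ?_⟩
  by_cases h : a.1 = b.1
  · exact Or.inl h
  · exact Or.inr (hS ha hb h)

lemma lexProd_neighborSet_inter_preimage_fst {T : Set V} {a : Σ v, Fin (t v)} (ha : a.1 ∉ T) :
    (lexProd G t).neighborSet a ∩ Sigma.fst ⁻¹' T = Sigma.fst ⁻¹' (G.neighborSet a.1 ∩ T) := by
  ext b
  simp only [Set.mem_inter_iff, SimpleGraph.mem_neighborSet, lexProd_adj, Set.mem_preimage]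
  constructor
  · rintro ⟨⟨-, h | h⟩, hb⟩
    · exact absurd (h ▸ hb) ha
    · exact ⟨h, hb⟩
  · rintro ⟨h, hb⟩
    exact ⟨⟨fun hab => ha (hab ▸ hb), Or.inr h⟩, hb⟩

theorem IsNestedCliqueSplit.lexProd {s : Set V} (hG : IsNestedCliqueSplit G s) (t : V → ℕ) :
    IsNestedCliqueSplit (lexProd G t) (Sigma.fst ⁻¹' s) := by
  obtain ⟨hs, hsc, hchain⟩ := hG
  refine ⟨pairwise_adj_lexProd_preimage_fst hs, ?_, fun a ha b hb => ?_⟩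
  · rw [← Set.preimage_compl]
    exact pairwise_adj_lexProd_preimage_fst hsc
  · rw [← Set.preimage_compl, lexProd_neighborSet_inter_preimage_fst (not_not_intro ha),
      lexProd_neighborSet_inter_preimage_fst (not_not_intro hb)]
    exact (hchain a.1 ha b.1 hb).imp (Set.preimage_mono ·) (Set.preimage_mono ·)

end LexProd

theorem isNestedCliqueSplit_oboudi (m : ℕ) :
    IsNestedCliqueSplit (oboudi m) (Set.range Sum.inl) := by
  have hmono : ∀ i i' : Fin ((m + 1) / 2), (i : ℕ) ≤ i' →
      (oboudi m).neighborSet (Sum.inl i) ∩ (Set.range Sum.inl)ᶜ ⊆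
        (oboudi m).neighborSet (Sum.inl i') ∩ (Set.range Sum.inl)ᶜ := by
    rintro i i' hii' w ⟨hadj, hw⟩
    refine ⟨?_, hw⟩
    rw [Set.compl_range_inl] at hw
    obtain ⟨j, rfl⟩ := hw
    simp only [SimpleGraph.mem_neighborSet, oboudi, SimpleGraph.fromRel_adj, ne_eq, reduceCtorEq,
      not_false_eq_true, or_false, true_and] at hadj ⊢
    omega
  refine ⟨?_, ?_, ?_⟩
  · rintro _ ⟨i, rfl⟩ _ ⟨i', rfl⟩ h
    simpa [oboudi] using h
  · rw [Set.compl_range_inl]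
    rintro _ ⟨j, rfl⟩ _ ⟨j', rfl⟩ h
    simpa [oboudi] using h
  · rintro _ ⟨i, rfl⟩ _ ⟨i', rfl⟩
    exact (le_total (i : ℕ) i').imp (hmono i i') (hmono i' i)

theorem isNestedCliqueSplit_bGraph (k : ℕ) (nn : Fin k → ℕ) :
    IsNestedCliqueSplit (bGraph k nn) (Sigma.fst ⁻¹' Set.range Sum.inl) :=
  (isNestedCliqueSplit_oboudi k).lexProd _

theorem bGraph_ne_bot {k : ℕ} {nn : Fin k → ℕ} (hk : 3 ≤ k) (hnn : ∀ i, 1 ≤ nn i) :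
    bGraph k nn ≠ ⊥ := by
  let a : Fin ((k + 1) / 2) → Σ v : Fin ((k + 1) / 2) ⊕ Fin (k / 2), Fin (nn (toIdx v)) :=
    fun i => ⟨Sum.inl i, ⟨0, hnn _⟩⟩
  refine SimpleGraph.ne_bot_iff_exists_adj.mpr ⟨a ⟨0, by omega⟩, a ⟨1, by omega⟩, ?_⟩
  exact (isNestedCliqueSplit_bGraph k nn).1 ⟨_, rfl⟩ ⟨_, rfl⟩ (by simp [a])

theorem le_card_bGraph {k : ℕ} {nn : Fin k → ℕ} (hnn : ∀ i, 1 ≤ nn i) :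
    k ≤ Nat.card (Σ v : Fin ((k + 1) / 2) ⊕ Fin (k / 2), Fin (nn (toIdx v))) := by
  have hinj : Function.Injective fun v : Fin ((k + 1) / 2) ⊕ Fin (k / 2) =>
      (⟨v, ⟨0, hnn _⟩⟩ : Σ v : Fin ((k + 1) / 2) ⊕ Fin (k / 2), Fin (nn (toIdx v))) :=
    fun _ _ h => congrArg Sigma.fst h
  have := Nat.card_le_card_of_injective _ hinj
  rw [Nat.card_sum, Nat.card_fin, Nat.card_fin] at this
  omega

theorem isNestedCliqueSplit_insert_neighborSet [Finite V] {G : SimpleGraph V} {v : V}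
    (hX : IsXComplete G v) (hR : IsReduced G v) :
    IsNestedCliqueSplit G (insert v (G.neighborSet v)) := by
  have hY : (insert v (G.neighborSet v))ᶜ = Yset G v := by rw [Yset, Set.union_singleton]
  have hvY : ∀ S, G.neighborSet v ∩ Yset G v ⊆ S := fun _ _ ⟨hw, hwY⟩ => absurd (Or.inl hw) hwY
  refine ⟨?_, hY ▸ hX.2.1, ?_⟩
  · exact Set.pairwise_insert.mpr ⟨hX.2.2, fun b hb _ => ⟨hb, hb.symm⟩⟩
  · rw [hY]
    rintro a (rfl | ha) b (rfl | hb)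
    · exact Or.inl le_rfl
    · exact Or.inl (hvY _)
    · exact Or.inr (hvY _)
    · exact hR a ha b hb

theorem Dstar_nullity_two :
    (∀ (k : ℕ) (nn : Fin k → ℕ), 4 ≤ k → k ≤ 14 → (∀ i, 1 ≤ nn i) →
      (∑ i, nn i) ≤ 14 → lam (bGraph k nn) 3 = 0 → lam (bGraph k nn) 4 = 0 →
      lam (bGraph k nn) 5 < 0 ∧ nullCount (bGraph k nn) = 2) ∧
    (∀ (n s : ℕ), 3 ≤ s → s ≤ n - 3 → ∀ G : SimpleGraph (Fin n),
      G.Connected → memClass s G → ∀ v : Fin n, IsMinDegVertex G v →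
      ¬ (IsXComplete G v ∧ IsReduced G v)) := by
  refine ⟨fun k nn hk _ hnn _ h3 h4 => ?_, fun n s hs _ G _ hG v _ hXR => ?_⟩
  · have hV := (le_card_bGraph hnn).trans' hk
    have hnull : nullCount (bGraph k nn) = 2 :=
      le_antisymm (isNestedCliqueSplit_bGraph k nn).nullCount_le_two (two_le_nullCount hV h3 h4)
    exact ⟨lam_five_neg (bGraph_ne_bot (by omega) hnn) hV hnull.le h3 h4, hnull⟩
  · have := (isNestedCliqueSplit_insert_neighborSet hXR.1 hXR.2).nullCount_le_two
    have := hG.2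
    omega

end TwoPosEig
end
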